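/- Let σ(y) = (1/2)(δ_{ab} y^a y^b - (λ²/3) R_{acbd} y^a y^b y^c y^d), where R_{acbd} has the symmetries of the Riemann tensor, and let √q(y) = 1 - (λ²/6) R_{ab} y^a y^b with R_{ab} = R_{acbd}δ^{cd} the contracted tensor and R = R_{ab}δ^{ab}. Then, expanding to second order in λ, ∫_{ℝ³} √q(y) · (1 + Rε²λ²/6) · (2πε²)^{-3/2} e^{-σ(y)/ε²} d³y = 1 + O(λ³). -/

import Mathlib

open MeasureTheory Real
open Filter Topology


lemma integrable_pow_gauss {b : ℝ} (hb : 0 < b) (n : ℕ) :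
    Integrable fun x : ℝ => x ^ n * Real.exp (-b * x ^ 2) := by
  have h : (-1 : ℝ) < (n : ℝ) := lt_of_lt_of_le (by norm_num) (Nat.cast_nonneg n)
  simpa [Real.rpow_natCast] using integrable_rpow_mul_exp_neg_mul_sq hb h

lemma tendsto_pow_gauss {b : ℝ} (hb : 0 < b) (n : ℕ) :
    Tendsto (fun x : ℝ => x ^ n * Real.exp (-b * x ^ 2)) (cocompact ℝ) (𝓝 0) := by
  refine squeeze_zero_norm (a := fun x : ℝ => |x| ^ (n : ℝ) * Real.exp (-b * x ^ 2)) ?_ ?_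
  · intro x
    rw [norm_mul, Real.norm_eq_abs, Real.norm_eq_abs, Real.abs_exp, abs_pow,
      ← Real.rpow_natCast |x| n]
  · exact tendsto_rpow_abs_mul_exp_neg_mul_sq_cocompact hb n

lemma gauss_moment_rec {b : ℝ} (hb : 0 < b) (n : ℕ) :
    (2 * b) * ∫ x : ℝ, x ^ (n + 2) * Real.exp (-b * x ^ 2)
      = ((n : ℝ) + 1) * ∫ x : ℝ, x ^ n * Real.exp (-b * x ^ 2) := by
  have hderiv : ∀ x : ℝ, HasDerivAt (fun x : ℝ => x ^ (n + 1) * Real.exp (-b * x ^ 2))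
      (((n : ℝ) + 1) * (x ^ n * Real.exp (-b * x ^ 2))
        - (2 * b) * (x ^ (n + 2) * Real.exp (-b * x ^ 2))) x := by
    intro x
    have h1 : HasDerivAt (fun x : ℝ => x ^ (n + 1)) (((n : ℝ) + 1) * x ^ n) x := by
      simpa using hasDerivAt_pow (n + 1) x
    have h2 : HasDerivAt (fun x : ℝ => Real.exp (-b * x ^ 2))
        (Real.exp (-b * x ^ 2) * (-b * (2 * x))) x := by
      have h3 : HasDerivAt (fun x : ℝ => -b * x ^ 2) (-b * (2 * x)) x := by
        simpa using (hasDerivAt_pow 2 x).const_mul (-b)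
      exact h3.exp
    exact (h1.mul h2).congr_deriv (by ring)
  have hint : Integrable (fun x : ℝ =>
      ((n : ℝ) + 1) * (x ^ n * Real.exp (-b * x ^ 2))
        - (2 * b) * (x ^ (n + 2) * Real.exp (-b * x ^ 2))) :=
    ((integrable_pow_gauss hb n).const_mul _).sub ((integrable_pow_gauss hb (n + 2)).const_mul _)
  have hbot : Tendsto (fun x : ℝ => x ^ (n + 1) * Real.exp (-b * x ^ 2)) atBot (𝓝 0) :=
    (tendsto_pow_gauss hb (n + 1)).mono_left (by rw [cocompact_eq_atBot_atTop]; exact le_sup_left)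
  have htop : Tendsto (fun x : ℝ => x ^ (n + 1) * Real.exp (-b * x ^ 2)) atTop (𝓝 0) :=
    (tendsto_pow_gauss hb (n + 1)).mono_left (by rw [cocompact_eq_atBot_atTop]; exact le_sup_right)
  have h0 := integral_of_hasDerivAt_of_tendsto hderiv hint hbot htop
  rw [integral_sub ((integrable_pow_gauss hb n).const_mul _)
      ((integrable_pow_gauss hb (n + 2)).const_mul _),
    integral_const_mul, integral_const_mul] at h0
  linarith

lemma gauss_moment_odd {b : ℝ} (n : ℕ) :
    ∫ x : ℝ, x ^ (2 * n + 1) * Real.exp (-b * x ^ 2) = 0 := by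
  have h := integral_neg_eq_self (fun x : ℝ => x ^ (2 * n + 1) * Real.exp (-b * x ^ 2)) volume
  have h2 : ∀ x : ℝ, (-x) ^ (2 * n + 1) * Real.exp (-b * (-x) ^ 2)
      = -(x ^ (2 * n + 1) * Real.exp (-b * x ^ 2)) := by
    intro x
    rw [Odd.neg_pow ⟨n, by ring⟩, neg_sq]
    ring
  simp_rw [h2, integral_neg] at h
  linarith

noncomputable def nu (ε : ℝ) (k : ℕ) : ℝ :=
  (∫ x : ℝ, x ^ k * Real.exp (-(2 * ε ^ 2)⁻¹ * x ^ 2)) / Real.sqrt (2 * π * ε ^ 2)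

variable {ε : ℝ}

lemma hb_pos (hε : 0 < ε) : 0 < (2 * ε ^ 2)⁻¹ := by positivity

lemma sqrt_2pie_pos (hε : 0 < ε) : 0 < Real.sqrt (2 * π * ε ^ 2) := by
  have : 0 < 2 * π * ε ^ 2 := by positivity
  exact Real.sqrt_pos.mpr this

lemma M_zero (hε : 0 < ε) :
    (∫ x : ℝ, x ^ 0 * Real.exp (-(2 * ε ^ 2)⁻¹ * x ^ 2)) = Real.sqrt (2 * π * ε ^ 2) := by
  simp only [pow_zero, one_mul]
  rw [integral_gaussian]
  congr 1
  field_simp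

lemma nu_zero (hε : 0 < ε) : nu ε 0 = 1 := by
  rw [nu, M_zero hε, div_self (sqrt_2pie_pos hε).ne']

lemma nu_one : nu ε 1 = 0 := by
  rw [nu, show (1:ℕ) = 2*0+1 from rfl, gauss_moment_odd, zero_div]

lemma nu_two (hε : 0 < ε) : nu ε 2 = ε ^ 2 := by
  have h := gauss_moment_rec (hb_pos hε) 0
  rw [M_zero hε] at h
  have h2 : (2 * (2 * ε ^ 2)⁻¹) = (ε ^ 2)⁻¹ := by
    field_simp
  rw [nu]
  rw [h2] at h
  rw [show (0:ℕ) + 2 = 2 from rfl] at h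
  have hs := (sqrt_2pie_pos hε).ne'
  have hε2 : (ε ^ 2) ≠ 0 := by positivity
  field_simp at h ⊢
  linarith

lemma nu_three : nu ε 3 = 0 := by
  rw [nu, show (3:ℕ) = 2*1+1 from rfl, gauss_moment_odd, zero_div]

lemma nu_four (hε : 0 < ε) : nu ε 4 = 3 * ε ^ 4 := by
  have h := gauss_moment_rec (hb_pos hε) 2
  have h0 := gauss_moment_rec (hb_pos hε) 0
  rw [M_zero hε] at h0
  have h2 : (2 * (2 * ε ^ 2)⁻¹) = (ε ^ 2)⁻¹ := by field_simp
  rw [h2] at h h0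
  rw [show (0:ℕ) + 2 = 2 from rfl] at h0
  rw [show (2:ℕ) + 2 = 4 from rfl] at h
  have hs := (sqrt_2pie_pos hε).ne'
  have hε2 : (ε ^ 2) ≠ 0 := by positivity
  rw [nu]
  field_simp at h h0 ⊢
  nlinarith [h, h0]

noncomputable def Gd (ε : ℝ) (y : EuclideanSpace ℝ (Fin 3)) : ℝ :=
  (2 * π * ε ^ 2) ^ (-(3:ℝ)/2) * Real.exp (-‖y‖ ^ 2 / (2 * ε ^ 2))

lemma integrand_eq (hε : 0 < ε) (m : Fin 3 → ℕ) (y : EuclideanSpace ℝ (Fin 3)) :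
    Gd ε y * ∏ i, y i ^ m i
    = (2 * π * ε ^ 2) ^ (-(3:ℝ)/2)
        * ∏ i, (y i ^ m i * Real.exp (-(2 * ε ^ 2)⁻¹ * (y i) ^ 2)) := by
  rw [Gd]
  have hnorm : ‖y‖ ^ 2 = ∑ i, (y i) ^ 2 := by
    rw [EuclideanSpace.norm_eq, Real.sq_sqrt (by positivity)]
    simp [sq_abs]
  have harg : -‖y‖ ^ 2 / (2 * ε ^ 2) = ∑ i, (-(2 * ε ^ 2)⁻¹ * (y i) ^ 2) := by
    rw [hnorm, ← Finset.mul_sum]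
    ring
  rw [harg, Real.exp_sum, mul_assoc, ← Finset.prod_mul_distrib]
  congr 1
  exact Finset.prod_congr rfl fun i _ => mul_comm _ _

lemma moment_prod (hε : 0 < ε) (m : Fin 3 → ℕ) :
    (∫ y : EuclideanSpace ℝ (Fin 3), Gd ε y * ∏ i, y i ^ m i)
    = ∏ i, nu ε (m i) := by
  simp_rw [integrand_eq hε m]
  rw [← ((EuclideanSpace.volume_preserving_symm_measurableEquiv_toLp (Fin 3)).symm).integral_comp']
  simp only [MeasurableEquiv.symm_symm, MeasurableEquiv.coe_toLp, PiLp.toLp_apply]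
  rw [MeasureTheory.integral_const_mul,
    integral_fintype_prod_volume_eq_prod (ι := Fin 3)
      (fun i (t : ℝ) => t ^ m i * Real.exp (-(2 * ε ^ 2)⁻¹ * t ^ 2))]
  have hx : (0:ℝ) ≤ 2 * π * ε ^ 2 := by positivity
  have hc : (2 * π * ε ^ 2) ^ (-(3:ℝ)/2) = ((Real.sqrt (2 * π * ε ^ 2))⁻¹) ^ (3:ℕ) := by
    rw [Real.sqrt_eq_rpow, ← Real.rpow_neg hx, ← Real.rpow_natCast ((2 * π * ε ^ 2) ^ (-(1/(2:ℝ)))) 3,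
      ← Real.rpow_mul hx]
    norm_num
  rw [hc]
  simp only [nu, div_eq_mul_inv, Finset.prod_mul_distrib, Finset.prod_const, Finset.card_univ,
    Fintype.card_fin]
  ring

lemma integrable_moment (hε : 0 < ε) (m : Fin 3 → ℕ) :
    Integrable (fun y : EuclideanSpace ℝ (Fin 3) => Gd ε y * ∏ i, y i ^ m i) := by
  simp_rw [integrand_eq hε m]
  rw [← MeasurePreserving.integrable_comp_emb
    ((EuclideanSpace.volume_preserving_symm_measurableEquiv_toLp (Fin 3)).symm)
    (MeasurableEquiv.measurableEmbedding _)]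
  simp only [Function.comp_def, MeasurableEquiv.symm_symm, MeasurableEquiv.coe_toLp,
    PiLp.toLp_apply]
  exact (Integrable.fintype_prod
    (f := fun i (t : ℝ) => t ^ m i * Real.exp (-(2 * ε ^ 2)⁻¹ * t ^ 2))
    (fun i => integrable_pow_gauss (hb_pos hε) (m i))).const_mul _

def n2 (a b : Fin 3) : Fin 3 → ℕ := fun i => (if a = i then 1 else 0) + (if b = i then 1 else 0)

def n4 (a b c d : Fin 3) : Fin 3 → ℕ := fun i =>
  (if a = i then 1 else 0) + (if b = i then 1 else 0)
    + (if c = i then 1 else 0) + (if d = i then 1 else 0)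

lemma prod_pow2 (a b : Fin 3) (y : EuclideanSpace ℝ (Fin 3)) :
    (∏ i, y i ^ n2 a b i) = y a * y b := by
  simp only [n2, pow_add, Finset.prod_mul_distrib, pow_ite, pow_one, pow_zero,
    Finset.prod_ite_eq, Finset.mem_univ, if_true]

lemma prod_pow4 (a b c d : Fin 3) (y : EuclideanSpace ℝ (Fin 3)) :
    (∏ i, y i ^ n4 a b c d i) = y a * y b * y c * y d := by
  simp only [n4, pow_add, Finset.prod_mul_distrib, pow_ite, pow_one, pow_zero,
    Finset.prod_ite_eq, Finset.mem_univ, if_true]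

lemma I2 (hε : 0 < ε) (a b : Fin 3) :
    (∫ y : EuclideanSpace ℝ (Fin 3), Gd ε y * (y a * y b))
      = if a = b then ε ^ 2 else 0 := by
  simp_rw [fun y : EuclideanSpace ℝ (Fin 3) => (prod_pow2 a b y).symm]
  rw [moment_prod hε]
  fin_cases a <;> fin_cases b <;>
    (simp [n2, Fin.prod_univ_three, nu_zero hε, nu_one, nu_two hε]; try ring)

lemma intG2 (hε : 0 < ε) (a b : Fin 3) :
    Integrable (fun y : EuclideanSpace ℝ (Fin 3) => Gd ε y * (y a * y b)) := by
  simp_rw [fun y : EuclideanSpace ℝ (Fin 3) => (prod_pow2 a b y).symm]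
  exact integrable_moment hε _

lemma I4 (hε : 0 < ε) (a b c d : Fin 3) :
    (∫ y : EuclideanSpace ℝ (Fin 3), Gd ε y * (y a * y b * y c * y d))
      = ε ^ 4 * ((if a = b then (1:ℝ) else 0) * (if c = d then (1:ℝ) else 0)
          + (if a = c then (1:ℝ) else 0) * (if b = d then (1:ℝ) else 0)
          + (if a = d then (1:ℝ) else 0) * (if b = c then (1:ℝ) else 0)) := by
  simp_rw [fun y : EuclideanSpace ℝ (Fin 3) => (prod_pow4 a b c d y).symm]
  rw [moment_prod hε]
  fin_cases a <;> fin_cases b <;> fin_cases c <;> fin_cases d <;>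
    (simp [n4, Fin.prod_univ_three, nu_zero hε, nu_one, nu_two hε, nu_three, nu_four hε]; try ring)

lemma intG4 (hε : 0 < ε) (a b c d : Fin 3) :
    Integrable (fun y : EuclideanSpace ℝ (Fin 3) => Gd ε y * (y a * y b * y c * y d)) := by
  simp_rw [fun y : EuclideanSpace ℝ (Fin 3) => (prod_pow4 a b c d y).symm]
  exact integrable_moment hε _

lemma intG (hε : 0 < ε) : Integrable (fun y : EuclideanSpace ℝ (Fin 3) => Gd ε y) := by
  have := integrable_moment hε (fun _ => 0)
  simpa using this

lemma IG (hε : 0 < ε) : (∫ y : EuclideanSpace ℝ (Fin 3), Gd ε y) = 1 := by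
  have := moment_prod hε (fun _ => 0)
  simpa [nu_zero hε] using this

lemma integral_double (hε : 0 < ε) (f : Fin 3 → Fin 3 → ℝ) :
    (∫ y : EuclideanSpace ℝ (Fin 3), ∑ a, ∑ b, f a b * (Gd ε y * (y a * y b)))
      = (∑ a, f a a) * ε ^ 2 := by
  rw [integral_finset_sum _
    (fun a _ => integrable_finset_sum _ (fun b _ => ((intG2 hε a b).const_mul _)))]
  have h : ∀ a : Fin 3,
      (∫ y : EuclideanSpace ℝ (Fin 3), ∑ b, f a b * (Gd ε y * (y a * y b)))
        = ∑ b, f a b * (if a = b then ε ^ 2 else 0) := by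
    intro a
    rw [integral_finset_sum _ (fun b _ => ((intG2 hε a b).const_mul _))]
    exact Finset.sum_congr rfl fun b _ => by rw [MeasureTheory.integral_const_mul, I2 hε]
  simp_rw [h]
  simp only [mul_ite, mul_zero, Finset.sum_ite_eq, Finset.mem_univ, if_true, ← Finset.sum_mul]

lemma integral_quad (hε : 0 < ε) (f : Fin 3 → Fin 3 → Fin 3 → Fin 3 → ℝ) :
    (∫ y : EuclideanSpace ℝ (Fin 3),
        ∑ a, ∑ b, ∑ c, ∑ d, f a b c d * (Gd ε y * (y a * y b * y c * y d)))
      = ∑ a, ∑ b, ∑ c, ∑ d, f a b c d *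
          (ε ^ 4 * ((if a = b then (1:ℝ) else 0) * (if c = d then (1:ℝ) else 0)
            + (if a = c then (1:ℝ) else 0) * (if b = d then (1:ℝ) else 0)
            + (if a = d then (1:ℝ) else 0) * (if b = c then (1:ℝ) else 0))) := by
  rw [integral_finset_sum _ (fun a _ => integrable_finset_sum _ (fun b _ =>
    integrable_finset_sum _ (fun c _ => integrable_finset_sum _ (fun d _ =>
      ((intG4 hε a b c d).const_mul _)))))]
  refine Finset.sum_congr rfl fun a _ => ?_
  rw [integral_finset_sum _ (fun b _ => integrable_finset_sum _ (fun c _ =>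
    integrable_finset_sum _ (fun d _ => ((intG4 hε a b c d).const_mul _))))]
  refine Finset.sum_congr rfl fun b _ => ?_
  rw [integral_finset_sum _ (fun c _ =>
    integrable_finset_sum _ (fun d _ => ((intG4 hε a b c d).const_mul _)))]
  refine Finset.sum_congr rfl fun c _ => ?_
  rw [integral_finset_sum _ (fun d _ => ((intG4 hε a b c d).const_mul _))]
  refine Finset.sum_congr rfl fun d _ => ?_
  rw [MeasureTheory.integral_const_mul, I4 hε]


/-- Normal law in curved space: with `σ(y) = ½(‖y‖² - (λ²/3) R_{acbd} y^a y^b y^c y^d)`,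
`√q(y) = 1 - (λ²/6) R_{ab} y^a y^b` and the normalization `𝒩 = 1 + Rε²λ²/6`, the
second-order expansion in `λ` of `∫ √q · 𝒩 · (2πε²)^{-3/2} e^{-σ/ε²}` is `1`:
the `λ²` coefficient of the expansion vanishes. Here the `λ²` coefficient of the
expanded integrand is
`Gaussian(y) · (Rε²/6 - R_{ab}y^a y^b/6 + R_{acbd}y^a y^b y^c y^d/(6ε²))`,
where `R_{ab} = R_{acbd} δ^{cd}` and `R = R_{ab} δ^{ab}`. -/
theorem curved_space_normal_law_normalized_second_order
    (ε lam : ℝ) (hε : 0 < ε) (Riem : Fin 3 → Fin 3 → Fin 3 → Fin 3 → ℝ)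
    (h1 : ∀ a b c d, Riem a b c d = -Riem b a c d)
    (h2 : ∀ a b c d, Riem a b c d = -Riem a b d c)
    (h3 : ∀ a b c d, Riem a b c d = Riem c d a b) :
    (∫ y : EuclideanSpace ℝ (Fin 3),
        ((2 * π * ε ^ 2) ^ (-(3 : ℝ) / 2) * Real.exp (-‖y‖ ^ 2 / (2 * ε ^ 2))) *
          (1 + lam ^ 2 *
            ((∑ a, ∑ c, Riem a c a c) * ε ^ 2 / 6
              - (∑ a, ∑ b, (∑ c, Riem a c b c) * y a * y b) / 6
              + (∑ a, ∑ b, ∑ c, ∑ d, Riem a c b d * y a * y b * y c * y d) / (6 * ε ^ 2))))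
      = 1 := by
  have key : (fun y : EuclideanSpace ℝ (Fin 3) =>
      ((2 * π * ε ^ 2) ^ (-(3 : ℝ) / 2) * Real.exp (-‖y‖ ^ 2 / (2 * ε ^ 2))) *
          (1 + lam ^ 2 *
            ((∑ a, ∑ c, Riem a c a c) * ε ^ 2 / 6
              - (∑ a, ∑ b, (∑ c, Riem a c b c) * y a * y b) / 6
              + (∑ a, ∑ b, ∑ c, ∑ d, Riem a c b d * y a * y b * y c * y d) / (6 * ε ^ 2))))
    = fun y : EuclideanSpace ℝ (Fin 3) =>
        (1 + lam ^ 2 * ((∑ a, ∑ c, Riem a c a c) * ε ^ 2 / 6)) * Gd ε y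
        + ((∑ a, ∑ b, (-(lam ^ 2) / 6 * (∑ c, Riem a c b c)) * (Gd ε y * (y a * y b)))
        + ∑ a, ∑ b, ∑ c, ∑ d,
            (lam ^ 2 / (6 * ε ^ 2) * Riem a c b d) * (Gd ε y * (y a * y b * y c * y d))) := by
    funext y
    have e2 : (∑ a, ∑ b, (-(lam ^ 2) / 6 * (∑ c, Riem a c b c)) * (Gd ε y * (y a * y b)))
        = (-(lam ^ 2) / 6 * Gd ε y) * ∑ a, ∑ b, (∑ c, Riem a c b c) * y a * y b := by
      rw [Finset.mul_sum]
      refine Finset.sum_congr rfl fun a _ => ?_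
      rw [Finset.mul_sum]
      exact Finset.sum_congr rfl fun b _ => by ring
    have e4 : (∑ a, ∑ b, ∑ c, ∑ d,
          (lam ^ 2 / (6 * ε ^ 2) * Riem a c b d) * (Gd ε y * (y a * y b * y c * y d)))
        = (lam ^ 2 / (6 * ε ^ 2) * Gd ε y)
            * ∑ a, ∑ b, ∑ c, ∑ d, Riem a c b d * y a * y b * y c * y d := by
      rw [Finset.mul_sum]
      refine Finset.sum_congr rfl fun a _ => ?_
      rw [Finset.mul_sum]
      refine Finset.sum_congr rfl fun b _ => ?_
      rw [Finset.mul_sum]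
      refine Finset.sum_congr rfl fun c _ => ?_
      rw [Finset.mul_sum]
      exact Finset.sum_congr rfl fun d _ => by ring
    rw [e2, e4, Gd]
    ring
  rw [key]
  have h0i : Integrable (fun y : EuclideanSpace ℝ (Fin 3) =>
      (1 + lam ^ 2 * ((∑ a, ∑ c, Riem a c a c) * ε ^ 2 / 6)) * Gd ε y) :=
    (intG hε).const_mul _
  have h2i : Integrable (fun y : EuclideanSpace ℝ (Fin 3) =>
      (∑ a, ∑ b, (-(lam ^ 2) / 6 * (∑ c, Riem a c b c)) * (Gd ε y * (y a * y b)))) :=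
    integrable_finset_sum _ (fun a _ => integrable_finset_sum _ (fun b _ =>
      ((intG2 hε a b).const_mul _)))
  have h4i : Integrable (fun y : EuclideanSpace ℝ (Fin 3) =>
      ∑ a, ∑ b, ∑ c, ∑ d,
        (lam ^ 2 / (6 * ε ^ 2) * Riem a c b d) * (Gd ε y * (y a * y b * y c * y d))) :=
    integrable_finset_sum _ (fun a _ => integrable_finset_sum _ (fun b _ =>
      integrable_finset_sum _ (fun c _ => integrable_finset_sum _ (fun d _ =>
        ((intG4 hε a b c d).const_mul _)))))
  have h24 : Integrable (fun y : EuclideanSpace ℝ (Fin 3) =>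
      (∑ a, ∑ b, (-(lam ^ 2) / 6 * (∑ c, Riem a c b c)) * (Gd ε y * (y a * y b)))
      + ∑ a, ∑ b, ∑ c, ∑ d,
          (lam ^ 2 / (6 * ε ^ 2) * Riem a c b d) * (Gd ε y * (y a * y b * y c * y d))) :=
    h2i.add h4i
  rw [integral_add h0i h24, integral_add h2i h4i,
    MeasureTheory.integral_const_mul, IG hε, mul_one,
    integral_double hε (fun a b => (-(lam ^ 2) / 6 * (∑ c, Riem a c b c))),
    integral_quad hε (fun a b c d => (lam ^ 2 / (6 * ε ^ 2) * Riem a c b d))]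
  have e2' : ∀ a b, Riem a a b b = 0 := fun a b => by have := h1 a a b b; linarith
  have e3' : ∀ a b, Riem a b b a = -Riem a b a b := fun a b => h2 a b b a
  have hquad : (∑ a, ∑ b, ∑ c, ∑ d, (lam ^ 2 / (6 * ε ^ 2) * Riem a c b d) *
          (ε ^ 4 * ((if a = b then (1:ℝ) else 0) * (if c = d then (1:ℝ) else 0)
            + (if a = c then (1:ℝ) else 0) * (if b = d then (1:ℝ) else 0)
            + (if a = d then (1:ℝ) else 0) * (if b = c then (1:ℝ) else 0)))) = 0 := by
    simp only [mul_add, Finset.sum_add_distrib, mul_ite, ite_mul, mul_zero, zero_mul,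
      mul_one, one_mul, Finset.sum_ite_eq, Finset.sum_ite_eq', Finset.mem_univ, if_true,
      Finset.sum_ite_irrel, Finset.sum_const_zero]
    simp only [e2', e3', mul_zero, zero_mul, mul_neg, neg_mul, Finset.sum_const_zero]
    simp only [Fin.sum_univ_three]
    ring
  rw [hquad]
  have htr : (∑ a : Fin 3, (-(lam ^ 2) / 6 * (∑ c, Riem a c a c)))
      = -(lam ^ 2) / 6 * (∑ a, ∑ c, Riem a c a c) := by
    rw [Finset.mul_sum]
  rw [htr]
  ring
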